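/- Let w, ĥ ∈ ℂ^M and μ > 0. Then the supremum of |w^H (ĥ + e)| over all e ∈ ℂ^M with ‖e‖₂ ≤ μ equals |w^H ĥ| + μ‖w‖₂, and this supremum is attained. -/

import Mathlib

/-! The bound `|⟪w, h + e⟫| ≤ |⟪w, h⟫| + ‖w‖ ‖e‖` is the triangle inequality plus Cauchy–Schwarz.
It is attained at `e = (μ / ‖w‖) u w`, where `u` is the phase of `⟪w, h⟫`: then
`⟪w, e⟫ = μ ‖w‖ u` has the same phase as `⟪w, h⟫`, so the two moduli add. -/

open scoped ComplexInnerProductSpace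

theorem RCLike.exists_norm_eq_one_and_eq_norm_mul {𝕜 : Type*} [RCLike 𝕜] (z : 𝕜) :
    ∃ u : 𝕜, ‖u‖ = 1 ∧ z = ‖z‖ * u := by
  by_cases hz : z = 0
  · exact ⟨1, by simp, by simp [hz]⟩
  · refine ⟨z / ‖z‖, by simp [norm_div, hz], ?_⟩
    have : (‖z‖ : 𝕜) ≠ 0 := by simpa using hz
    field_simp

section

variable {𝕜 E : Type*} [RCLike 𝕜] [NormedAddCommGroup E] [InnerProductSpace 𝕜 E]

open scoped InnerProductSpace

theorem norm_inner_add_le_of_norm_le (w h : E) {e : E} {μ : ℝ} (he : ‖e‖ ≤ μ) :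
    ‖⟪w, h + e⟫_𝕜‖ ≤ ‖⟪w, h⟫_𝕜‖ + μ * ‖w‖ :=
  calc ‖⟪w, h + e⟫_𝕜‖ ≤ ‖⟪w, h⟫_𝕜‖ + ‖⟪w, e⟫_𝕜‖ := by
        rw [inner_add_right]; exact norm_add_le _ _
    _ ≤ ‖⟪w, h⟫_𝕜‖ + ‖w‖ * ‖e‖ := by gcongr; exact norm_inner_le_norm w e
    _ ≤ ‖⟪w, h⟫_𝕜‖ + μ * ‖w‖ := by rw [mul_comm μ]; gcongr

theorem exists_norm_le_norm_inner_add_eq (w h : E) {μ : ℝ} (hμ : 0 ≤ μ) :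
    ∃ e : E, ‖e‖ ≤ μ ∧ ‖⟪w, h + e⟫_𝕜‖ = ‖⟪w, h⟫_𝕜‖ + μ * ‖w‖ := by
  obtain ⟨u, hu, hphase⟩ := RCLike.exists_norm_eq_one_and_eq_norm_mul ⟪w, h⟫_𝕜
  refine ⟨((μ / ‖w‖ : ℝ) : 𝕜) • u • w, ?_, ?_⟩
  · rw [norm_smul, norm_smul, hu, one_mul, RCLike.norm_ofReal, abs_of_nonneg (by positivity)]
    rcases eq_or_ne ‖w‖ 0 with hw | hw
    · simpa [hw] using hμ
    · rw [div_mul_cancel₀ μ hw]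
  · have hsq : μ / ‖w‖ * ‖w‖ ^ 2 = μ * ‖w‖ := by
      rcases eq_or_ne ‖w‖ 0 with hw | hw
      · simp [hw]
      · field_simp
    have hinner : ⟪w, h + ((μ / ‖w‖ : ℝ) : 𝕜) • u • w⟫_𝕜 =
        ((‖⟪w, h⟫_𝕜‖ + μ * ‖w‖ : ℝ) : 𝕜) * u := by
      rw [inner_add_right, inner_smul_right, inner_smul_right, inner_self_eq_norm_sq_to_K,
        ← hsq]
      conv_lhs => rw [hphase]
      push_cast
      ring
    rw [hinner, norm_mul, hu, mul_one, RCLike.norm_ofReal, abs_of_nonneg (by positivity)]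

theorem isGreatest_norm_inner_add_of_norm_le (w h : E) {μ : ℝ} (hμ : 0 ≤ μ) :
    IsGreatest {r : ℝ | ∃ e : E, ‖e‖ ≤ μ ∧ r = ‖⟪w, h + e⟫_𝕜‖}
      (‖⟪w, h⟫_𝕜‖ + μ * ‖w‖) := by
  obtain ⟨e, he, heq⟩ := exists_norm_le_norm_inner_add_eq (𝕜 := 𝕜) w h hμ
  refine ⟨⟨e, he, heq.symm⟩, ?_⟩
  rintro r ⟨e, he, rfl⟩
  exact norm_inner_add_le_of_norm_le w h he

end

/-- The supremum of `|wᴴ(ĥ+e)|` over `‖e‖ ≤ μ` equals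
`|wᴴĥ| + μ‖w‖`, and it is attained. -/
theorem stmt_7 {M : ℕ} (w hhat : EuclideanSpace ℂ (Fin M)) (μ : ℝ) (hμ : 0 < μ) :
    IsGreatest {r : ℝ | ∃ e : EuclideanSpace ℂ (Fin M), ‖e‖ ≤ μ ∧
        r = ‖⟪w, hhat + e⟫‖}
      (‖⟪w, hhat⟫‖ + μ * ‖w‖) :=
  isGreatest_norm_inner_add_of_norm_le w hhat hμ.le
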